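/- arXiv:2211.15038 — 2 statements merged into one kernel-verified Lean document; each statement's English description precedes it below -/
import Mathlib

section
/- There exists β₀ > 1 such that for all β ≥ β₀ and all (t,x) ∈ (0,T) × G satisfying ∑_{i=1}^n e^{β(xᵢ-x₀ᵢ)²} - n·e^{αβ(t-T/2)²} > 0, one has min_{i=1,...,n}(xᵢ-x₀ᵢ)² - nα²(t-T/2)² ≥ c₀ > 0, where c₀ = ((1-κ²)/2)·min_{x ∈ cl(G), i}(xᵢ-x₀ᵢ)². -/
open Real Finset

/-- `min_i (xᵢ - x₀ᵢ)²` over coordinates. -/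
noncomputable def minSq (n : ℕ) (x₀ x : Fin (n+1) → ℝ) : ℝ :=
  Finset.univ.inf' Finset.univ_nonempty (fun i => (x i - x₀ i)^2)

/-- `max_i (xᵢ - x₀ᵢ)²` over coordinates. -/
noncomputable def maxSq (n : ℕ) (x₀ x : Fin (n+1) → ℝ) : ℝ :=
  Finset.univ.sup' Finset.univ_nonempty (fun i => (x i - x₀ i)^2)

/-!
If `∑ᵢ e^{β(xᵢ-x₀ᵢ)²} > (n+1)·e^{αβτ²}` with `β > 0`, some coordinate satisfies
`(xᵢ-x₀ᵢ)² > ατ²`, so `ατ² < max_i (xᵢ-x₀ᵢ)²`. The choice of `α` gives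
`α·max_i (xᵢ-x₀ᵢ)² ≤ κ²/(n+1)·min_i (xᵢ-x₀ᵢ)²`, hence `(n+1)α²τ² ≤ κ²·min_i (xᵢ-x₀ᵢ)²` and
`min_i (xᵢ-x₀ᵢ)² - (n+1)α²τ² ≥ (1-κ²)·min_i (xᵢ-x₀ᵢ)² ≥ 2c₀`. Any `β₀ > 1` works.
-/

section CoordinateSquares

variable {n : ℕ} {x₀ x : Fin (n+1) → ℝ}

lemma sq_sub_le_maxSq (i : Fin (n+1)) : (x i - x₀ i)^2 ≤ maxSq n x₀ x :=
  Finset.le_sup' (fun j => (x j - x₀ j)^2) (Finset.mem_univ i)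

lemma maxSq_nonneg : 0 ≤ maxSq n x₀ x :=
  (sq_nonneg _).trans (sq_sub_le_maxSq 0)

lemma minSq_nonneg : 0 ≤ minSq n x₀ x :=
  Finset.le_inf' _ _ fun i _ => sq_nonneg (x i - x₀ i)

lemma exists_minSq_eq : ∃ i, minSq n x₀ x = (x i - x₀ i)^2 := by
  obtain ⟨i, -, hi⟩ := Finset.exists_mem_eq_inf' Finset.univ_nonempty fun i => (x i - x₀ i)^2
  exact ⟨i, hi⟩

lemma maxSq_pos_of_ne {i : Fin (n+1)} (h : x i ≠ x₀ i) : 0 < maxSq n x₀ x :=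
  (sq_pos_of_ne_zero (sub_ne_zero.2 h)).trans_le (sq_sub_le_maxSq i)

lemma lt_maxSq_of_card_mul_exp_lt_sum {β a : ℝ} (hβ : 0 < β)
    (h : ((n : ℝ)+1) * Real.exp (β * a) < ∑ i, Real.exp (β * (x i - x₀ i)^2)) :
    a < maxSq n x₀ x := by
  have hsum : ∑ _i : Fin (n+1), Real.exp (β * a) < ∑ i, Real.exp (β * (x i - x₀ i)^2) := by
    simpa using h
  obtain ⟨i, -, hi⟩ := Finset.exists_lt_of_sum_lt hsum
  have : a < (x i - x₀ i)^2 := lt_of_mul_lt_mul_left (Real.exp_lt_exp.1 hi) hβ.le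
  exact this.trans_le (sq_sub_le_maxSq i)

lemma card_mul_sq_mul_le {α κ s : ℝ} (hα : 0 ≤ α)
    (hαx : α * maxSq n x₀ x ≤ κ^2 / ((n : ℝ)+1) * minSq n x₀ x) (hs : α * s < maxSq n x₀ x) :
    ((n : ℝ)+1) * α^2 * s ≤ κ^2 * minSq n x₀ x := by
  have hn : (0 : ℝ) < (n : ℝ)+1 := by positivity
  calc ((n : ℝ)+1) * α^2 * s = ((n : ℝ)+1) * (α * (α * s)) := by ring
    _ ≤ ((n : ℝ)+1) * (α * maxSq n x₀ x) := by gcongr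
    _ ≤ ((n : ℝ)+1) * (κ^2 / ((n : ℝ)+1) * minSq n x₀ x) := by gcongr
    _ = κ^2 * minSq n x₀ x := by field_simp

end CoordinateSquares

section CoordinateDistances

variable {n : ℕ} {x₀ : Fin (n+1) → ℝ} {s : Set (Fin (n+1) → ℝ)}

lemma sq_le_sInf_sq_sub {c : ℝ} (hc : 0 < c) (hs : s.Nonempty)
    (hsep : ∀ x ∈ s, ∀ i, c ≤ |x i - x₀ i|) :
    c^2 ≤ sInf {r | ∃ x ∈ s, ∃ i, r = (x i - x₀ i)^2} := by
  obtain ⟨y, hy⟩ := hs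
  refine le_csInf ⟨_, y, hy, 0, rfl⟩ ?_
  rintro r ⟨x, hx, i, rfl⟩
  rw [← sq_abs (x i - x₀ i)]
  exact pow_le_pow_left₀ hc.le (hsep x hx i) 2

lemma sInf_sq_sub_le_minSq {x : Fin (n+1) → ℝ} (hx : x ∈ s) :
    sInf {r | ∃ x ∈ s, ∃ i, r = (x i - x₀ i)^2} ≤ minSq n x₀ x := by
  obtain ⟨i, hi⟩ := exists_minSq_eq (x₀ := x₀) (x := x)
  rw [hi]
  exact csInf_le ⟨0, by rintro r ⟨y, -, j, rfl⟩; positivity⟩ ⟨x, hx, i, rfl⟩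

lemma sInf_minSq_div_maxSq_nonneg :
    0 ≤ sInf {r | ∃ x ∈ s, r = minSq n x₀ x / maxSq n x₀ x} :=
  Real.sInf_nonneg fun _ ⟨_, _, hr⟩ => hr ▸ div_nonneg minSq_nonneg maxSq_nonneg

lemma sInf_minSq_div_maxSq_mul_maxSq_le {x : Fin (n+1) → ℝ} (hx : x ∈ s)
    (hmax : 0 < maxSq n x₀ x) :
    sInf {r | ∃ x ∈ s, r = minSq n x₀ x / maxSq n x₀ x} * maxSq n x₀ x ≤ minSq n x₀ x := by
  rw [← le_div_iff₀ hmax]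
  exact csInf_le ⟨0, fun _ ⟨_, _, hr⟩ => hr ▸ div_nonneg minSq_nonneg maxSq_nonneg⟩ ⟨x, hx, rfl⟩

end CoordinateDistances

theorem stmt_4_general (n : ℕ) (x₀ : Fin (n+1) → ℝ) (G : Set (Fin (n+1) → ℝ))
    (hGne : G.Nonempty)
    (hsep : ∃ c > 0, ∀ x ∈ closure G, ∀ i, c ≤ |x i - x₀ i|)
    (α T κ c₀ : ℝ)
    (hα : α = (κ^2/((n : ℝ)+1)) *
      sInf {r : ℝ | ∃ x ∈ closure G, r = minSq n x₀ x / maxSq n x₀ x})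
    (hc₀ : c₀ = ((1 - κ^2)/2) * sInf {r : ℝ | ∃ x ∈ closure G, ∃ i, r = (x i - x₀ i)^2})
    (hκ : 0 < κ) (hκ1 : κ < 1) :
    0 < c₀ ∧ ∃ β₀ > (1 : ℝ), ∀ β ≥ β₀, ∀ t ∈ Set.Ioo (0 : ℝ) T, ∀ x ∈ G,
      (∑ i, Real.exp (β * (x i - x₀ i)^2)) - ((n : ℝ)+1) * Real.exp (α*β*(t - T/2)^2) > 0 →
      minSq n x₀ x - ((n : ℝ)+1) * α^2 * (t - T/2)^2 ≥ c₀ := by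
  obtain ⟨c, hc, hsep⟩ := hsep
  have hmaxSq : ∀ x ∈ closure G, 0 < maxSq n x₀ x := fun x hx =>
    maxSq_pos_of_ne (i := 0) (sub_ne_zero.1 (abs_pos.1 (hc.trans_le (hsep x hx 0))))
  have hκ2 : 0 < 1 - κ^2 := by nlinarith
  have hS : 0 < (1 - κ^2) * sInf {r : ℝ | ∃ x ∈ closure G, ∃ i, r = (x i - x₀ i)^2} :=
    mul_pos hκ2 ((pow_pos hc 2).trans_le (sq_le_sInf_sq_sub hc (hGne.mono subset_closure) hsep))
  refine ⟨by rw [hc₀]; linarith, 2, by norm_num, fun β hβ t _ x hx hpos => ?_⟩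
  have hxG := subset_closure hx
  have hα0 : 0 ≤ α := hα ▸ mul_nonneg (by positivity) sInf_minSq_div_maxSq_nonneg
  have hαx : α * maxSq n x₀ x ≤ κ^2 / ((n : ℝ)+1) * minSq n x₀ x := by
    rw [hα, mul_assoc]
    gcongr
    exact sInf_minSq_div_maxSq_mul_maxSq_le hxG (hmaxSq x hxG)
  have hτ : α * (t - T/2)^2 < maxSq n x₀ x := by
    refine lt_maxSq_of_card_mul_exp_lt_sum (β := β) (by linarith) ?_
    have hexp : α * β * (t - T/2)^2 = β * (α * (t - T/2)^2) := by ring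
    rw [hexp] at hpos
    linarith
  have hcore := card_mul_sq_mul_le hα0 hαx hτ
  have hmin : (1 - κ^2) * sInf {r : ℝ | ∃ x ∈ closure G, ∃ i, r = (x i - x₀ i)^2} ≤
      (1 - κ^2) * minSq n x₀ x :=
    mul_le_mul_of_nonneg_left (sInf_sq_sub_le_minSq hxG) hκ2.le
  rw [hc₀]
  linarith

/-- Assertion (2) of Lemma 4.1: there is `β₀ > 1` such that for all `β ≥ β₀`, on the region
where `∑ e^{β(xᵢ-x₀ᵢ)²} - n e^{αβ(t-T/2)²} > 0` one has
`min_i (xᵢ-x₀ᵢ)² - nα²(t-T/2)² ≥ c₀ > 0`, with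
`c₀ = ((1-κ²)/2)·min_{x ∈ cl G, i} (xᵢ-x₀ᵢ)²`. Dimension `n ≥ 1` is encoded as `n+1`. -/
theorem stmt_4 (n : ℕ) (x₀ : Fin (n+1) → ℝ) (G : Set (Fin (n+1) → ℝ))
    (hG : Bornology.IsBounded G) (hGne : G.Nonempty)
    (hsep : ∃ c > 0, ∀ x ∈ closure G, ∀ i, c ≤ |x i - x₀ i|)
    (R₁ Tstar α T κ c₀ : ℝ)
    (hR₁ : R₁ = sSup {r : ℝ | ∃ x ∈ closure G, ∃ i, r = |x i - x₀ i|})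
    (hTstar : Tstar = 2 * Real.sqrt ((n : ℝ)+1) * R₁ *
      sSup {r : ℝ | ∃ x ∈ closure G, r = Real.sqrt (maxSq n x₀ x / minSq n x₀ x)})
    (hα : α = (κ^2/((n : ℝ)+1)) *
      sInf {r : ℝ | ∃ x ∈ closure G, r = minSq n x₀ x / maxSq n x₀ x})
    (hc₀ : c₀ = ((1 - κ^2)/2) * sInf {r : ℝ | ∃ x ∈ closure G, ∃ i, r = (x i - x₀ i)^2})
    (hκ : 0 < κ) (hκ1 : κ < 1) (hT : Tstar < T) (hκT : Tstar < κ * T) :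
    0 < c₀ ∧ ∃ β₀ > (1 : ℝ), ∀ β ≥ β₀, ∀ t ∈ Set.Ioo (0 : ℝ) T, ∀ x ∈ G,
      (∑ i, Real.exp (β * (x i - x₀ i)^2)) - ((n : ℝ)+1) * Real.exp (α*β*(t - T/2)^2) > 0 →
      minSq n x₀ x - ((n : ℝ)+1) * α^2 * (t - T/2)^2 ≥ c₀ :=
  stmt_4_general n x₀ G hGne hsep α T κ c₀ hα hc₀ hκ hκ1
end

section
/- Suppose (t,x) satisfies ∑_{i=1}^n e^{β(xᵢ-x₀ᵢ)²} > n·e^{αβ(t-T/2)²} and min_i(xᵢ-x₀ᵢ)² - nα²(t-T/2)² ≥ c₀ > 0. Then ∑_{i=1}^n e^{2β(xᵢ-x₀ᵢ)²}·(xᵢ-x₀ᵢ)² - α²n²·e^{2αβ(t-T/2)²}·(t-T/2)² ≥ (c₀c₁/√n)·[(∑_{i=1}^n e^{2β(xᵢ-x₀ᵢ)²})^{1/2} + √n·e^{αβ(t-T/2)²}], provided additionally ∑_{i=1}^n e^{β(xᵢ-x₀ᵢ)²} - n·e^{αβ(t-T/2)²} > c₁ > 0. -/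
/-!
Write `aᵢ = e^{β(xᵢ-x₀ᵢ)²}`, `b = e^{αβ(t-T/2)²}`, `N = n + 1` and `S = (∑ aᵢ²)^{1/2}`.
By Cauchy–Schwarz `∑ aᵢ ≤ √N S`, so the hypothesis `∑ aᵢ > N b` gives `N b² ≤ S²`; together with
`(xᵢ-x₀ᵢ)² ≥ c₀ + Nα²(t-T/2)²` this makes the left-hand side at least `c₀ S²`. Finally
`c₁ + N b < ∑ aᵢ ≤ √N S` gives `√N S² ≥ c₁ (S + √N b)`.
-/

open Real Finset

theorem Finset.sum_le_sqrt_card_mul_sqrt_sum_sq {ι : Type*} (s : Finset ι) (a : ι → ℝ) :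
    ∑ i ∈ s, a i ≤ √(#s : ℝ) * √(∑ i ∈ s, a i ^ 2) := by
  rw [← sqrt_mul (Nat.cast_nonneg _)]
  exact le_sqrt_of_sq_le (sq_sum_le_card_mul_sum_sq ..)

theorem div_mul_add_le_sq {q S b c : ℝ} (hq : 0 < q) (hS : 0 ≤ S) (hb : 0 ≤ b)
    (h : c + q ^ 2 * b ≤ q * S) : c / q * (S + q * b) ≤ S ^ 2 := by
  have hc : c ≤ q * S := by linarith [mul_nonneg (sq_nonneg q) hb]
  rw [div_mul_eq_mul_div, div_le_iff₀ hq]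
  calc c * (S + q * b) = c * S + q * b * c := by ring
    _ ≤ c * S + q * b * (q * S) := by gcongr
    _ = (c + q ^ 2 * b) * S := by ring
    _ ≤ q * S * S := by gcongr
    _ = S ^ 2 * q := by ring

theorem weighted_sum_sq_sub_ge {ι : Type*} [Fintype ι] (a y : ι → ℝ) {b r c₀ c₁ : ℝ}
    (hb : 0 ≤ b) (hr : 0 ≤ r) (hc₀ : 0 ≤ c₀) (hy : ∀ i, c₀ + Fintype.card ι * r ≤ y i)
    (hab : Fintype.card ι * b < ∑ i, a i) (hc₁ : c₁ < ∑ i, a i - Fintype.card ι * b) :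
    c₀ * c₁ / √(Fintype.card ι : ℝ) * (√(∑ i, a i ^ 2) + √(Fintype.card ι : ℝ) * b)
      ≤ ∑ i, a i ^ 2 * y i - r * (Fintype.card ι : ℝ) ^ 2 * b ^ 2 := by
  set N : ℝ := ↑(Fintype.card ι)
  set S := √(∑ i, a i ^ 2)
  have hCS : ∑ i, a i ≤ √N * S := by
    simpa only [card_univ] using Finset.sum_le_sqrt_card_mul_sqrt_sum_sq univ a
  have hN : 0 ≤ N := Nat.cast_nonneg _
  have hqq : √N ^ 2 = N := sq_sqrt hN
  have hS : 0 ≤ S := sqrt_nonneg _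
  have hSS : S ^ 2 = ∑ i, a i ^ 2 := sq_sqrt (sum_nonneg fun i _ => sq_nonneg (a i))
  have hq : 0 < √N := by
    refine (sqrt_nonneg N).lt_of_ne fun h0 => ?_
    rw [← h0, zero_mul] at hCS
    linarith [mul_nonneg hN hb]
  have hbS : √N * b ≤ S := by
    refine le_of_mul_le_mul_left ?_ hq
    rw [← mul_assoc, ← sq, hqq]
    linarith
  have hlow : c₀ * S ^ 2 ≤ ∑ i, a i ^ 2 * y i - r * N ^ 2 * b ^ 2 := by
    have hsum : (c₀ + N * r) * S ^ 2 ≤ ∑ i, a i ^ 2 * y i := by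
      rw [hSS, mul_sum]
      exact sum_le_sum fun i _ => by
        rw [mul_comm]; exact mul_le_mul_of_nonneg_left (hy i) (sq_nonneg _)
    have hNb : N * b ^ 2 ≤ S ^ 2 := by
      rw [← hqq, ← mul_pow]; exact pow_le_pow_left₀ (mul_nonneg hq.le hb) hbS 2
    linarith [mul_le_mul_of_nonneg_left hNb (mul_nonneg hr hN)]
  have hup : c₁ / √N * (S + √N * b) ≤ S ^ 2 :=
    div_mul_add_le_sq hq hS hb (by rw [hqq]; linarith)
  calc c₀ * c₁ / √N * (S + √N * b) = c₀ * (c₁ / √N * (S + √N * b)) := by ring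
    _ ≤ c₀ * S ^ 2 := by gcongr
    _ ≤ _ := hlow

theorem stmt_6_general (n : ℕ) (β α T c₀ c₁ : ℝ) (x₀ x : Fin (n+1) → ℝ) (t : ℝ)
    (hc₀ : 0 < c₀)
    (h1 : ∑ i, Real.exp (β * (x i - x₀ i)^2) > ((n : ℝ)+1) * Real.exp (α*β*(t - T/2)^2))
    (h2 : (Finset.univ.inf' Finset.univ_nonempty (fun i => (x i - x₀ i)^2))
            - ((n : ℝ)+1) * α^2 * (t - T/2)^2 ≥ c₀)
    (h3 : (∑ i, Real.exp (β * (x i - x₀ i)^2))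
            - ((n : ℝ)+1) * Real.exp (α*β*(t - T/2)^2) > c₁) :
    (∑ i, Real.exp (2*β*(x i - x₀ i)^2) * (x i - x₀ i)^2)
      - α^2 * ((n : ℝ)+1)^2 * Real.exp (2*α*β*(t - T/2)^2) * (t - T/2)^2
    ≥ (c₀ * c₁ / Real.sqrt ((n : ℝ)+1)) *
        (Real.sqrt (∑ i, Real.exp (2*β*(x i - x₀ i)^2))
          + Real.sqrt ((n : ℝ)+1) * Real.exp (α*β*(t - T/2)^2)) := by
  have hexp_two_mul (u : ℝ) : exp (2 * u) = exp u ^ 2 := by exact_mod_cast exp_nat_mul u 2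
  have hy : ∀ i, c₀ + ((n : ℝ) + 1) * (α ^ 2 * (t - T/2) ^ 2) ≤ (x i - x₀ i) ^ 2 := fun i => by
    have := inf'_le (fun i => (x i - x₀ i) ^ 2) (mem_univ i)
    linarith
  have hN : (Fintype.card (Fin (n + 1)) : ℝ) = n + 1 := by simp
  have key := weighted_sum_sq_sub_ge (r := α ^ 2 * (t - T/2) ^ 2)
    (fun i => exp (β * (x i - x₀ i) ^ 2)) (fun i => (x i - x₀ i) ^ 2)
    (exp_pos _).le (by positivity) hc₀.le (hN ▸ hy) (hN ▸ h1) (hN ▸ h3)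
  rw [hN] at key
  simp only [mul_assoc, hexp_two_mul] at key ⊢
  linarith

/-- The key estimate (zd1) in the Carleman estimate. Dimension `n ≥ 1` encoded as `n+1`. -/
theorem stmt_6 (n : ℕ) (β α T c₀ c₁ : ℝ) (x₀ x : Fin (n+1) → ℝ) (t : ℝ)
    (hβ : 0 < β) (hα : 0 < α) (hα1 : α < 1) (hT : 0 < T) (hc₀ : 0 < c₀) (hc₁ : 0 < c₁)
    (h1 : ∑ i, Real.exp (β * (x i - x₀ i)^2) > ((n : ℝ)+1) * Real.exp (α*β*(t - T/2)^2))
    (h2 : (Finset.univ.inf' Finset.univ_nonempty (fun i => (x i - x₀ i)^2))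
            - ((n : ℝ)+1) * α^2 * (t - T/2)^2 ≥ c₀)
    (h3 : (∑ i, Real.exp (β * (x i - x₀ i)^2))
            - ((n : ℝ)+1) * Real.exp (α*β*(t - T/2)^2) > c₁) :
    (∑ i, Real.exp (2*β*(x i - x₀ i)^2) * (x i - x₀ i)^2)
      - α^2 * ((n : ℝ)+1)^2 * Real.exp (2*α*β*(t - T/2)^2) * (t - T/2)^2
    ≥ (c₀ * c₁ / Real.sqrt ((n : ℝ)+1)) *
        (Real.sqrt (∑ i, Real.exp (2*β*(x i - x₀ i)^2))
          + Real.sqrt ((n : ℝ)+1) * Real.exp (α*β*(t - T/2)^2)) :=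
  stmt_6_general n β α T c₀ c₁ x₀ x t hc₀ h1 h2 h3
end
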